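/- arXiv:2404.06728 — 2 statements merged into one kernel-verified Lean document; each statement's English description precedes it below -/
import Mathlib

section
/- Let G be a simple graph on a vertex type V with unit edge costs and graph distance dist, let s, g ∈ V with s reachable from g, and let B ⊆ V be a set of vertices such that every walk from s to g in G contains a vertex of B. If h : V → ℝ is admissible, i.e. h(v) ≤ dist(v, g) for every vertex v reachable from g, then there exists a vertex v ∈ B, reachable from s, with dist(s, v) + h(v) ≤ dist(s, g). In particular, the minimum over v ∈ B of dist(s, v) + h(v) is at most the true optimal cost dist(s, g). -/
/-- Admissibility of the local heuristic: if every walk from `s` to `g`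
contains a vertex of the border set `B` and `h` is admissible, then some
border vertex `v` reachable from `s` satisfies
`dist s v + h v ≤ dist s g`. -/
theorem local_heuristic_admissible {V : Type*} (G : SimpleGraph V) (s g : V)
    (hr : G.Reachable g s) (B : Set V)
    (hB : ∀ w : G.Walk s g, ∃ v ∈ w.support, v ∈ B)
    (h : V → ℝ) (hadm : ∀ v, G.Reachable g v → h v ≤ (G.dist v g : ℝ)) :
    ∃ v ∈ B, G.Reachable s v ∧ (G.dist s v : ℝ) + h v ≤ (G.dist s g : ℝ) := by
  classical
  obtain ⟨w, hw⟩ := hr.symm.exists_walk_length_eq_dist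
  obtain ⟨v, hv, hvB⟩ := hB w
  have h1 : G.dist s v ≤ (w.takeUntil v hv).length := SimpleGraph.dist_le _
  have h2 : G.dist v g ≤ (w.dropUntil v hv).length := SimpleGraph.dist_le _
  have hlen : (w.takeUntil v hv).length + (w.dropUntil v hv).length = w.length :=
    by rw [← SimpleGraph.Walk.length_append, w.take_spec hv]
  refine ⟨v, hvB, ⟨w.takeUntil v hv⟩, ?_⟩
  have hvg : G.Reachable g v := ⟨(w.dropUntil v hv).reverse⟩
  have := hadm v hvg
  have hd : G.dist s v + G.dist v g ≤ G.dist s g := by omega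
  have : (G.dist s v : ℝ) + h v ≤ (G.dist s v : ℝ) + (G.dist v g : ℝ) := by linarith
  calc (G.dist s v : ℝ) + h v ≤ ((G.dist s v + G.dist v g : ℕ) : ℝ) := by push_cast; linarith
    _ ≤ (G.dist s g : ℝ) := by exact_mod_cast hd
end

section
/- Let G be a simple graph on a vertex type V with unit edge costs and graph distance dist, let s, g ∈ V, and let B ⊆ V be such that every walk from s to g in G contains a vertex of B and s is reachable from g. Then there exists a vertex v ∈ B with dist(s, g) = dist(s, v) + dist(v, g); i.e., the optimal cost from s to g decomposes exactly through some border vertex, so the minimum over v ∈ B of dist(s, v) + dist(v, g) equals dist(s, g). -/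
/-- The optimal cost from `s` to `g` decomposes exactly through some vertex of
a separating border set `B`. -/
theorem dist_decomposes_through_border {V : Type*} (G : SimpleGraph V)
    (s g : V) (hr : G.Reachable g s) (B : Set V)
    (hB : ∀ w : G.Walk s g, ∃ v ∈ w.support, v ∈ B) :
    ∃ v ∈ B, G.dist s g = G.dist s v + G.dist v g := by
  classical
  obtain ⟨p, hp⟩ := hr.symm.exists_walk_length_eq_dist
  obtain ⟨v, hv, hvB⟩ := hB p
  refine ⟨v, hvB, le_antisymm ?_ ?_⟩
  · obtain ⟨q1, hq1⟩ := (SimpleGraph.Walk.reachable (p.takeUntil v hv)).exists_walk_length_eq_dist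
    obtain ⟨q2, hq2⟩ := (SimpleGraph.Walk.reachable (p.dropUntil v hv)).exists_walk_length_eq_dist
    have h1 := G.dist_le (q1.append q2)
    rw [SimpleGraph.Walk.length_append] at h1
    omega
  · have h2 := G.dist_le (p.takeUntil v hv)
    have h3 := G.dist_le (p.dropUntil v hv)
    have h4 : (p.takeUntil v hv).length + (p.dropUntil v hv).length = p.length := by
      rw [← SimpleGraph.Walk.length_append, p.take_spec hv]
    omega
end
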